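/- In any Conway semiring S, for all a, b, c, d, f, g, h, i, j ∈ S one has f + g·(a + b·d*·c)*·i + g·a*·b·(d + c·a*·b)*·j + h·d*·c·(a + b·d*·c)*·i + h·(d + c·a*·b)*·j = f + h·d*·j + (g + h·d*·c)·(a + b·d*·c)*·(i + b·d*·j). -/
import Mathlib


/-- A Conway semiring: a semiring equipped with a star operation satisfying
the sum star identity `(a+b)* = a*·(b·a*)*` and
the product star identity `(a·b)* = 1 + a·(b·a)*·b`. -/
class ConwaySemiring (S : Type) extends Semiring S where
  astar : S → S
  sum_star : ∀ a b : S, astar (a + b) = astar a * astar (b * astar a)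
  prod_star : ∀ a b : S, astar (a * b) = 1 + a * astar (b * a) * b

open ConwaySemiring

lemma star_unfold_right {S : Type} [ConwaySemiring S] (x : S) :
    astar x = 1 + astar x * x := by
  have h := prod_star (1 : S) x
  simpa using h

lemma slide {S : Type} [ConwaySemiring S] (x y : S) :
    astar (x * y) * x = x * astar (y * x) := by
  rw [prod_star x y]
  conv_rhs => rw [star_unfold_right (y * x)]
  simp [mul_assoc, mul_add, add_mul, mul_one, one_mul, add_assoc, add_comm, add_left_comm]

lemma key1 {S : Type} [ConwaySemiring S] (a b c d : S) :
    astar a * b * astar (d + c * astar a * b)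
      = astar (a + b * astar d * c) * b * astar d := by
  rw [sum_star d (c * astar a * b), sum_star a (b * astar d * c)]
  rw [show c * astar a * b * astar d = c * astar a * (b * astar d) from by simp [mul_assoc]]
  rw [show b * astar d * c * astar a = b * astar d * (c * astar a) from by simp [mul_assoc]]
  have s1 : astar (b * astar d * (c * astar a)) * (b * astar d)
      = b * astar d * astar (c * astar a * (b * astar d)) := slide _ _
  calc astar a * b * (astar d * astar (c * astar a * (b * astar d)))
      = astar a * (b * astar d * astar (c * astar a * (b * astar d))) := by simp [mul_assoc, mul_add, add_mul, mul_one, one_mul, add_assoc, add_comm, add_left_comm]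
    _ = astar a * (astar (b * astar d * (c * astar a)) * (b * astar d)) := by rw [s1]
    _ = astar a * astar (b * astar d * (c * astar a)) * b * astar d := by simp [mul_assoc, mul_add, add_mul, mul_one, one_mul, add_assoc, add_comm, add_left_comm]

lemma key2 {S : Type} [ConwaySemiring S] (a b c d : S) :
    astar (d + c * astar a * b)
      = astar d + astar d * c * astar (a + b * astar d * c) * b * astar d := by
  rw [sum_star d (c * astar a * b), sum_star a (b * astar d * c)]
  rw [show c * astar a * b * astar d = c * (astar a * b * astar d) from by simp [mul_assoc]]
  rw [show b * astar d * c * astar a = b * astar d * c * astar a from rfl]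
  have hp : astar (c * (astar a * b * astar d))
      = 1 + c * astar (astar a * b * astar d * c) * (astar a * b * astar d) :=
    prod_star c (astar a * b * astar d)
  have s2 : astar (astar a * (b * astar d * c)) * astar a
      = astar a * astar (b * astar d * c * astar a) := slide _ _
  rw [hp]
  rw [show astar a * b * astar d * c = astar a * (b * astar d * c) from by simp [mul_assoc]]
  calc astar d * (1 + c * astar (astar a * (b * astar d * c)) * (astar a * b * astar d))
      = astar d + astar d * c * (astar (astar a * (b * astar d * c)) * astar a)
          * b * astar d := by simp [mul_assoc, mul_add, add_mul, mul_one, one_mul, add_assoc, add_comm, add_left_comm]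
    _ = astar d + astar d * c * (astar a * astar (b * astar d * c * astar a))
          * b * astar d := by rw [s2]
    _ = astar d + astar d * c * (astar a * astar (b * astar d * c * astar a)) * b
          * astar d := by simp [mul_assoc, mul_add, add_mul, mul_one, one_mul, add_assoc, add_comm, add_left_comm]

/-- In any Conway semiring,
`f + g·(a + b·d*·c)*·i + g·a*·b·(d + c·a*·b)*·j + h·d*·c·(a + b·d*·c)*·i + h·(d + c·a*·b)*·j
  = f + h·d*·j + (g + h·d*·c)·(a + b·d*·c)*·(i + b·d*·j)`. -/
theorem statement5 (S : Type) [ConwaySemiring S] (a b c d f g h i j : S) :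
    f + g * astar (a + b * astar d * c) * i
      + g * astar a * b * astar (d + c * astar a * b) * j
      + h * astar d * c * astar (a + b * astar d * c) * i
      + h * astar (d + c * astar a * b) * j
      = f + h * astar d * j
        + (g + h * astar d * c) * astar (a + b * astar d * c) * (i + b * astar d * j) := by
  have k1 := key1 a b c d
  have k2 := key2 a b c d
  calc f + g * astar (a + b * astar d * c) * i
      + g * astar a * b * astar (d + c * astar a * b) * j
      + h * astar d * c * astar (a + b * astar d * c) * i
      + h * astar (d + c * astar a * b) * j
      = f + g * astar (a + b * astar d * c) * i
      + g * (astar a * b * astar (d + c * astar a * b)) * j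
      + h * astar d * c * astar (a + b * astar d * c) * i
      + h * astar (d + c * astar a * b) * j := by simp [mul_assoc, mul_add, add_mul, mul_one, one_mul, add_assoc, add_comm, add_left_comm]
    _ = f + g * astar (a + b * astar d * c) * i
      + g * (astar (a + b * astar d * c) * b * astar d) * j
      + h * astar d * c * astar (a + b * astar d * c) * i
      + h * (astar d + astar d * c * astar (a + b * astar d * c) * b * astar d) * j := by
        rw [k1, k2]
    _ = f + h * astar d * j
        + (g + h * astar d * c) * astar (a + b * astar d * c) * (i + b * astar d * j) := by
        simp [mul_assoc, mul_add, add_mul, mul_one, one_mul, add_assoc, add_comm, add_left_comm]
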